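/- arXiv:2506.12022 — 2 statements merged into one kernel-verified Lean document; each statement's English description precedes it below -/
import Mathlib

section
/- For all k ≤ n there exists a map A : {0,1}^n → ℝ^{k×k} such that for all x, y ∈ {0,1}^n: the Hamming distance dist(x,y) ≥ k if and only if rank(A(x) − A(y)) = k. (That is, HD_{≥k}^n is a symmetric rank problem of order k.) -/
/-!
Take `A x = U * diagonal x * Uᵀ` for a suitable real `k × n` matrix `U`. Then
`A x - A y = U * diagonal (x - y) * Uᵀ` has rank at most the number of nonzero entries of `x - y`,
i.e. at most `dist x y`. Conversely, when `dist x y ≥ k` the determinant of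
`U * diagonal (x - y) * Uᵀ`, read as a polynomial in the entries of `U`, is nonzero: choosing
for `U` the rows of the identity indexed by `k` coordinates where `x` and `y` differ gives a
diagonal matrix with entries `±1`. Finitely many nonzero real polynomials have a common
non-root, and any such `U` works for all pairs at once.
-/

open Matrix Finset MvPolynomial

theorem MvPolynomial.exists_forall_eval_ne_zero {σ ι R : Type*} [CommRing R] [IsDomain R]
    [Infinite R] {p : ι → MvPolynomial σ R} {s : Finset ι} (hp : ∀ i ∈ s, p i ≠ 0) :
    ∃ x, ∀ i ∈ s, eval x (p i) ≠ 0 := by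
  by_contra! h
  refine prod_ne_zero_iff.2 hp (MvPolynomial.funext fun x => ?_)
  obtain ⟨i, hi, hx⟩ := h x
  rw [map_prod, map_zero]
  exact prod_eq_zero hi hx

namespace Matrix

variable {m n R : Type*} [Fintype n] [DecidableEq n]

def weightedGram [NonUnitalNonAssocSemiring R] (U : Matrix m n R) (d : n → R) : Matrix m m R :=
  U * diagonal d * Uᵀ

theorem weightedGram_sub [NonUnitalNonAssocRing R] (U : Matrix m n R) (d₁ d₂ : n → R) :
    U.weightedGram d₁ - U.weightedGram d₂ = U.weightedGram (d₁ - d₂) := by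
  rw [weightedGram, weightedGram, weightedGram, ← Matrix.sub_mul, ← Matrix.mul_sub, diagonal_sub]
  rfl

theorem rank_weightedGram_le [Fintype m] [Field R] [DecidableEq R] (U : Matrix m n R)
    (d : n → R) : (U.weightedGram d).rank ≤ #{i | d i ≠ 0} :=
  calc (U * diagonal d * Uᵀ).rank ≤ (U * diagonal d).rank := rank_mul_le_left _ _
    _ ≤ (diagonal d).rank := rank_mul_le_right _ _
    _ = #{i | d i ≠ 0} := by rw [rank_diagonal, Fintype.card_subtype]

theorem weightedGram_one_submatrix [DecidableEq m] [NonAssocSemiring R] {σ : m → n}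
    (hσ : Function.Injective σ) (d : n → R) :
    ((1 : Matrix n n R).submatrix σ id).weightedGram d = diagonal (d ∘ σ) := by
  rw [weightedGram, transpose_submatrix, transpose_one, ← Equiv.coe_refl, one_submatrix_mul,
    mul_submatrix_one, submatrix_submatrix]
  simpa using submatrix_diagonal d σ hσ

variable [Fintype m] [DecidableEq m]

theorem eval_det_weightedGram_mvPolynomialX [CommRing R] (U : Matrix m n R) (d : n → R) :
    eval (fun p : m × n => U p.1 p.2) ((mvPolynomialX m n R).weightedGram (C ∘ d)).det =
      (U.weightedGram d).det := by
  have hX : (mvPolynomialX m n R).map (eval fun p : m × n => U p.1 p.2) = U :=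
    mvPolynomialX_map_eval₂ _ U
  rw [RingHom.map_det, RingHom.mapMatrix_apply, weightedGram, Matrix.map_mul, Matrix.map_mul,
    transpose_map, diagonal_map (map_zero _), hX]
  simp only [Function.comp_apply, eval_C]
  rfl

theorem det_weightedGram_mvPolynomialX_ne_zero [CommRing R] [IsDomain R] [DecidableEq R]
    {d : n → R} (hd : Fintype.card m ≤ #{i | d i ≠ 0}) :
    ((mvPolynomialX m n R).weightedGram (C ∘ d)).det ≠ 0 := by
  rw [← Fintype.card_subtype] at hd
  obtain ⟨σ⟩ := Function.Embedding.nonempty_of_card_le hd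
  have hτ : Function.Injective (Subtype.val ∘ σ) := Subtype.val_injective.comp σ.injective
  intro h
  have hdet :=
    eval_det_weightedGram_mvPolynomialX ((1 : Matrix n n R).submatrix (Subtype.val ∘ σ) id) d
  rw [h, map_zero, weightedGram_one_submatrix hτ, det_diagonal] at hdet
  exact prod_ne_zero_iff.2 (fun i _ => (σ i).2) hdet.symm

theorem exists_forall_det_weightedGram_ne_zero {ι : Type*} [CommRing R] [IsDomain R]
    [Infinite R] [DecidableEq R] {d : ι → n → R} {s : Finset ι}
    (hd : ∀ i ∈ s, Fintype.card m ≤ #{l | d i l ≠ 0}) :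
    ∃ U : Matrix m n R, ∀ i ∈ s, (U.weightedGram (d i)).det ≠ 0 := by
  obtain ⟨x, hx⟩ := exists_forall_eval_ne_zero
    (p := fun i => ((mvPolynomialX m n R).weightedGram (C ∘ d i)).det)
    fun i hi => det_weightedGram_mvPolynomialX_ne_zero (hd i hi)
  refine ⟨of fun i l => x (i, l), fun i hi => ?_⟩
  rw [← eval_det_weightedGram_mvPolynomialX]
  exact hx i hi

end Matrix

theorem stmt9_general (n k : ℕ) :
    ∃ A : (Fin n → Bool) → Matrix (Fin k) (Fin k) ℝ,
      ∀ x y : Fin n → Bool, k ≤ hammingDist x y ↔ (A x - A y).rank = k := by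
  classical
  let e : (Fin n → Bool) → Fin n → ℝ := fun x l => (x l).toNat
  have card_support (x y : Fin n → Bool) : #{l | (e x - e y) l ≠ 0} = hammingDist x y := by
    refine congrArg card (filter_congr fun l _ => ?_)
    simp only [e, Pi.sub_apply, ne_eq, sub_eq_zero, Nat.cast_inj]
    cases x l <;> cases y l <;> simp
  obtain ⟨U, hU⟩ := exists_forall_det_weightedGram_ne_zero (m := Fin k)
    (d := fun p : (Fin n → Bool) × (Fin n → Bool) => e p.1 - e p.2)
    (s := {p | k ≤ hammingDist p.1 p.2})
    fun p hp => by simpa only [Fintype.card_fin, card_support] using (mem_filter.1 hp).2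
  refine ⟨fun x => U.weightedGram (e x), fun x y => ?_⟩
  rw [weightedGram_sub]
  constructor
  · intro h
    simpa using rank_of_isUnit _ ((isUnit_iff_isUnit_det _).2 (hU (x, y) (by simpa)).isUnit)
  · intro h
    rw [← h, ← card_support]
    exact rank_weightedGram_le U _

theorem stmt9 (n k : ℕ) (hk : k ≤ n) :
    ∃ A : (Fin n → Bool) → Matrix (Fin k) (Fin k) ℝ,
      ∀ x y : Fin n → Bool, k ≤ hammingDist x y ↔ (A x - A y).rank = k :=
  stmt9_general n k
end

section
/- There exists a function C : ℕ → ℕ such that the following holds for all k: for every N, a, b ∈ ℕ, every pair of maps A, B : [N] → ℝ^{a×b}, and every function g : ℕ → {0,1} that is constant on inputs ≥ k, the boolean matrix P ∈ {0,1}^{N×N} defined by P(x,y) = g(rank(A(x) + B(y))) satisfies signrank(P) ≤ C(k). (Rank problems of order k have sign-rank bounded by a function of k alone, independent of the matrix size N.) -/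
/-!
After projecting every matrix `A x + B y` to a `k × k` matrix `U (A x + B y) V` with generic `U`
and `V`, all ranks below `k` are preserved and all larger ranks become `k`, so `P x y = g (ρ x y)`
for the rank `ρ x y ≤ k` of the projected matrix. The sum of squares of the `t × t` minors of
`u + v` is a fixed polynomial in the entries of `u` and `v` which is positive exactly when
`t ≤ rank (u + v)`; evaluated at `u = U A x V`, `v = U B y V` it gives a matrix `p t` of rank
bounded by its number of monomials, a function of `k` alone. For `β` large enough, the sign of
`∑ t ≤ k, ±β ^ t p t x y` is the sign in front of its leading term `t = ρ x y`, so choosing the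
signs according to `g` yields the required sign pattern.
-/

open Matrix

/-- The sign-rank of a boolean matrix: the minimum rank of a real matrix that is
positive on the 1-entries and negative on the 0-entries. -/
noncomputable def signrank {I J : Type*} [Fintype J] (M : Matrix I J Bool) : ℕ :=
  sInf {r : ℕ | ∃ A : Matrix I J ℝ, A.rank = r ∧
    ∀ i j, (M i j = true → 0 < A i j) ∧ (M i j = false → A i j < 0)}

open Filter Finset

namespace Matrix

section Rank

variable {K : Type*} [Field K] {m n κ : Type*}

theorem exists_linearIndependent_row_submatrix [Finite m] [Fintype n] {r : ℕ}
    {M : Matrix m n K} (h : r ≤ M.rank) :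
    ∃ f : Fin r → m, LinearIndependent K (M.submatrix f id).row := by
  obtain ⟨ι, a, ha, hspan, hli⟩ := exists_linearIndependent' K M.row
  have : Fintype ι := @Fintype.ofFinite ι (Finite.of_injective a ha)
  have hr : r ≤ Fintype.card ι := by
    rwa [rank_eq_finrank_span_row, ← hspan, finrank_span_eq_card hli] at h
  obtain ⟨e⟩ : Nonempty (Fin r ↪ ι) :=
    Function.Embedding.nonempty_of_card_le (by simpa using hr)
  exact ⟨a ∘ e, hli.comp e e.injective⟩

theorem rank_add_le [Fintype n] (A B : Matrix m n K) : (A + B).rank ≤ A.rank + B.rank := by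
  rw [rank, rank, rank, mulVecLin_add]
  exact (Submodule.finrank_mono (LinearMap.range_add_le _ _)).trans
    (Submodule.finrank_add_le_finrank_add_finrank _ _)

theorem rank_sum_le [Fintype n] {ι : Type*} (s : Finset ι) (A : ι → Matrix m n K) :
    (∑ i ∈ s, A i).rank ≤ ∑ i ∈ s, (A i).rank :=
  le_sum_of_subadditive (fun B : Matrix m n K => B.rank) rank_zero.le rank_add_le s A

variable [Fintype m] [Fintype n]

theorem le_rank_iff_exists_det_submatrix_ne_zero {r : ℕ} (M : Matrix m n K) :
    r ≤ M.rank ↔ ∃ (f : Fin r → m) (g : Fin r → n), (M.submatrix f g).det ≠ 0 := by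
  constructor
  · intro h
    obtain ⟨f, hf⟩ := exists_linearIndependent_row_submatrix h
    have hrank : r ≤ (M.submatrix f id)ᵀ.rank := by
      rw [rank_transpose, hf.rank_matrix, Fintype.card_fin]
    obtain ⟨g, hg⟩ := exists_linearIndependent_row_submatrix hrank
    refine ⟨f, g, fun h0 => ?_⟩
    rw [linearIndependent_rows_iff_isUnit, isUnit_iff_isUnit_det] at hg
    exact hg.ne_zero (by simpa [← transpose_submatrix] using h0)
  · rintro ⟨f, g, h⟩
    simpa [rank_of_det_ne_zero h] using rank_submatrix_le M f g

theorem rank_smul_le (c : K) (A : Matrix m n K) : (c • A).rank ≤ A.rank := by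
  classical
  simpa using rank_mul_le_right (c • (1 : Matrix m m K)) A

variable [Fintype κ] [DecidableEq m]

theorem exists_min_rank_le_rank_mul (M : Matrix m n K) :
    ∃ U : Matrix κ m K, min M.rank (Fintype.card κ) ≤ (U * M).rank := by
  classical
  set r := min M.rank (Fintype.card κ)
  obtain ⟨f, hf⟩ := exists_linearIndependent_row_submatrix (min_le_left M.rank (Fintype.card κ))
  obtain ⟨e⟩ : Nonempty (Fin r ↪ κ) :=
    Function.Embedding.nonempty_of_card_le (by rw [Fintype.card_fin]; exact min_le_right _ _)
  set E : Matrix κ (Fin r) K := (1 : Matrix κ κ K).submatrix id e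
  have hE : Eᵀ * E = 1 := by
    rw [transpose_submatrix, transpose_one, ← submatrix_mul _ _ _ _ _ Function.bijective_id,
      Matrix.one_mul, submatrix_one_embedding]
  have hsel : (1 : Matrix m m K).submatrix f id * M = M.submatrix f id := by
    simpa using one_submatrix_mul f (Equiv.refl m) M
  refine ⟨E * (1 : Matrix m m K).submatrix f id, ?_⟩
  calc r = (M.submatrix f id).rank := by rw [hf.rank_matrix, Fintype.card_fin]
    _ = (Eᵀ * (E * M.submatrix f id)).rank := by rw [← Matrix.mul_assoc, hE, Matrix.one_mul]
    _ ≤ (E * M.submatrix f id).rank := rank_mul_le_right _ _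
    _ = _ := by rw [Matrix.mul_assoc, hsel]

end Rank

end Matrix

namespace MvPolynomial

theorem exists_forall_eval_ne_zero_s11 {R σ ι : Type*} [CommRing R] [IsDomain R]
    [Infinite R] [Fintype ι] (Q : ι → MvPolynomial σ R) (hQ : ∀ i, ∃ x, eval x (Q i) ≠ 0) :
    ∃ x, ∀ i, eval x (Q i) ≠ 0 := by
  have hprod : ∏ i, Q i ≠ 0 := prod_ne_zero_iff.2 fun i _ hi => by
    obtain ⟨x, hx⟩ := hQ i
    exact hx (by rw [hi, map_zero])
  obtain ⟨x, hx⟩ : ∃ x, eval x (∏ i, Q i) ≠ 0 := by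
    by_contra! h
    exact hprod (MvPolynomial.funext fun x => by rw [h x, map_zero])
  rw [map_prod, prod_ne_zero_iff] at hx
  exact ⟨x, fun i => hx i (mem_univ i)⟩

end MvPolynomial

namespace Matrix

open MvPolynomial

section GenericProjection

variable {K : Type*} [Field K] {m n κ : Type*} [Fintype m] [Fintype n] [Fintype κ]

omit [Fintype n] [Fintype κ] in
theorem map_eval_mvPolynomialX_mul (U : Matrix κ m K) (M : Matrix m n K) :
    (mvPolynomialX κ m K * M.map (C (σ := κ × m))).map (eval fun p : κ × m => U p.1 p.2) =
      U * M := by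
  ext i j
  simp [mul_apply]

omit [Fintype n] [Fintype κ] in
theorem eval_det_submatrix_mvPolynomialX_mul {l : Type*} [Fintype l] [DecidableEq l]
    (U : Matrix κ m K) (M : Matrix m n K) (f : l → κ) (g : l → n) :
    eval (fun p : κ × m => U p.1 p.2)
        ((mvPolynomialX κ m K * M.map (C (σ := κ × m))).submatrix f g).det =
      ((U * M).submatrix f g).det := by
  rw [RingHom.map_det, RingHom.mapMatrix_apply, ← submatrix_map, map_eval_mvPolynomialX_mul]

variable [DecidableEq m] [Infinite K] {ι : Type*} [Fintype ι]

/-- Each fixed minor of `U * M i` is a polynomial in the entries of `U`, nonzero at some `U`;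
a common nonzero of these polynomials works for every `i` at once. -/
theorem exists_rank_mul_eq_min (M : ι → Matrix m n K) :
    ∃ U : Matrix κ m K, ∀ i, (U * M i).rank = min (M i).rank (Fintype.card κ) := by
  have hminor : ∀ i, ∃ (f : Fin (min (M i).rank (Fintype.card κ)) → κ) (g : Fin _ → n)
      (x : κ × m → K),
        eval x ((mvPolynomialX κ m K * (M i).map (C (σ := κ × m))).submatrix f g).det ≠ 0 := by
    intro i
    obtain ⟨U, hU⟩ := exists_min_rank_le_rank_mul (κ := κ) (M i)
    obtain ⟨f, g, hfg⟩ := (le_rank_iff_exists_det_submatrix_ne_zero _).1 hU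
    exact ⟨f, g, fun p => U p.1 p.2, by rwa [eval_det_submatrix_mvPolynomialX_mul]⟩
  choose f g x hx using hminor
  obtain ⟨y, hy⟩ := MvPolynomial.exists_forall_eval_ne_zero_s11 _ fun i => ⟨x i, hx i⟩
  refine ⟨of fun a b => y (a, b), fun i => le_antisymm
    (le_min (rank_mul_le_right _ _) (rank_le_card_height _)) ?_⟩
  refine (le_rank_iff_exists_det_submatrix_ne_zero _).2 ⟨f i, g i, ?_⟩
  rw [← eval_det_submatrix_mvPolynomialX_mul]
  exact hy i

theorem exists_rank_mul_mul_eq_min [DecidableEq n] (M : ι → Matrix m n K) :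
    ∃ (U : Matrix κ m K) (V : Matrix n κ K),
      ∀ i, (U * M i * V).rank = min (M i).rank (Fintype.card κ) := by
  obtain ⟨U, hU⟩ := exists_rank_mul_eq_min (κ := κ) M
  obtain ⟨W, hW⟩ := exists_rank_mul_eq_min (κ := κ) fun i => (U * M i)ᵀ
  refine ⟨U, Wᵀ, fun i => ?_⟩
  rw [← rank_transpose, transpose_mul, transpose_transpose, hW, rank_transpose, hU, min_assoc,
    min_self]

end GenericProjection

section SumSqMinors

variable {K : Type*} {m n : Type*} [Fintype m] [Fintype n]

def sumSqMinors [CommRing K] (t : ℕ) (M : Matrix m n K) : K :=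
  ∑ f : Fin t → m, ∑ g : Fin t → n, (M.submatrix f g).det ^ 2

theorem _root_.RingHom.map_sumSqMinors {R S : Type*} [CommRing R] [CommRing S] (φ : R →+* S)
    (t : ℕ) (M : Matrix m n R) : φ (sumSqMinors t M) = sumSqMinors t (M.map φ) := by
  simp [sumSqMinors, RingHom.map_det, submatrix_map]

variable [Field K] [LinearOrder K] [IsStrictOrderedRing K]

theorem sumSqMinors_nonneg (t : ℕ) (M : Matrix m n K) : 0 ≤ sumSqMinors t M :=
  sum_nonneg fun _ _ => sum_nonneg fun _ _ => sq_nonneg _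

theorem sumSqMinors_eq_zero_iff {t : ℕ} {M : Matrix m n K} :
    sumSqMinors t M = 0 ↔ M.rank < t := by
  rw [← not_le, le_rank_iff_exists_det_submatrix_ne_zero, sumSqMinors,
    sum_eq_zero_iff_of_nonneg fun _ _ => sum_nonneg fun _ _ => sq_nonneg _]
  simp [sum_eq_zero_iff_of_nonneg, sq_nonneg]

theorem sumSqMinors_pos_iff {t : ℕ} {M : Matrix m n K} : 0 < sumSqMinors t M ↔ t ≤ M.rank := by
  rw [(sumSqMinors_nonneg t M).lt_iff_ne', Ne, sumSqMinors_eq_zero_iff, not_lt]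

end SumSqMinors

/-- `sumSqMinors t (u + v)` as a polynomial in the entries of `u` (variables `inl`) and of `v`
(variables `inr`). -/
noncomputable def sumSqMinorsAddPoly (κ K : Type*) [Fintype κ] [CommRing K] (t : ℕ) :
    MvPolynomial ((κ × κ) ⊕ (κ × κ)) K :=
  sumSqMinors t (of fun i j => X (.inl (i, j)) + X (.inr (i, j)))

theorem eval_sumSqMinorsAddPoly {κ K : Type*} [Fintype κ] [CommRing K] (t : ℕ)
    (u v : Matrix κ κ K) :
    eval (Sum.elim (fun p : κ × κ => u p.1 p.2) (fun p => v p.1 p.2)) (sumSqMinorsAddPoly κ K t) =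
      sumSqMinors t (u + v) := by
  rw [sumSqMinorsAddPoly, RingHom.map_sumSqMinors]
  congr 1
  ext i j
  simp

/-- Each monomial contributes a matrix of rank one: a product of a function of the row and a
function of the column. -/
theorem rank_of_eval_le_card_support {K : Type*} [Field K] {σ τ ι ι' : Type*} [Fintype σ]
    [Fintype τ] [Fintype ι'] (q : MvPolynomial (σ ⊕ τ) K) (u : ι → σ → K) (v : ι' → τ → K) :
    (of fun x y => eval (Sum.elim (u x) (v y)) q).rank ≤ q.support.card := by
  let L : Matrix ι q.support K :=
    of fun x d => coeff d q * ∏ i, u x i ^ (d : σ ⊕ τ →₀ ℕ) (.inl i)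
  let R : Matrix q.support ι' K := of fun d y => ∏ j, v y j ^ (d : σ ⊕ τ →₀ ℕ) (.inr j)
  have hLR : of (fun x y => eval (Sum.elim (u x) (v y)) q) = L * R := by
    ext x y
    simp only [eval_eq', Fintype.prod_sum_type, Sum.elim_inl, Sum.elim_inr, of_apply, mul_apply,
      univ_eq_attach, mul_assoc, L, R]
    exact (sum_attach _ _).symm
  rw [hLR]
  exact (rank_mul_le_left _ _).trans (by simpa using rank_le_card_width L)

end Matrix

namespace Polynomial

theorem eventually_pos_leadingCoeff_mul_eval {𝕜 : Type*} [NormedField 𝕜] [LinearOrder 𝕜]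
    [IsStrictOrderedRing 𝕜] [OrderTopology 𝕜] {q : 𝕜[X]} (hq : q ≠ 0) :
    ∀ᶠ x in atTop, 0 < q.leadingCoeff * q.eval x := by
  refine (Asymptotics.IsEquivalent.refl.mul (isEquivalent_atTop_lead q)).eventually_pos ?_
  filter_upwards [eventually_gt_atTop 0] with x hx
  have hc : q.leadingCoeff ≠ 0 := leadingCoeff_ne_zero.2 hq
  simp only [Pi.mul_apply, ← mul_assoc, ← sq]
  positivity

theorem leadingCoeff_sum_C_mul_X_pow {R : Type*} [Semiring R] {a : ℕ → R} {r k : ℕ}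
    (hrk : r ≤ k) (ha : ∀ t, r < t → a t = 0) (hr : a r ≠ 0) :
    (∑ t ∈ range (k + 1), C (a t) * X ^ t).leadingCoeff = a r := by
  have hcoeff : ∀ t, (∑ t ∈ range (k + 1), C (a t) * X ^ t).coeff t =
      if t ≤ k then a t else 0 := by
    intro t
    simp [finsetSum_coeff]
  have hdeg : (∑ t ∈ range (k + 1), C (a t) * X ^ t).natDegree = r := by
    refine natDegree_eq_of_le_of_coeff_ne_zero (natDegree_le_iff_coeff_eq_zero.2 fun t ht => ?_) ?_
    · rw [hcoeff]
      split_ifs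
      exacts [ha t (by exact_mod_cast ht), rfl]
    · rwa [hcoeff, if_pos hrk]
  rw [leadingCoeff, hdeg, hcoeff, if_pos hrk]

end Polynomial

open Polynomial

theorem signrank_le_rank {I J : Type*} [Fintype J] {M : Matrix I J Bool} (A : Matrix I J ℝ)
    (hA : ∀ i j, (M i j = true → 0 < A i j) ∧ (M i j = false → A i j < 0)) :
    signrank M ≤ A.rank :=
  Nat.sInf_le ⟨A, rfl, hA⟩

/-- The witness is `∑ t ≤ k, ±β ^ t • p t` for large `β`, the sign of the `t`-th term being
`s t`. -/
theorem signrank_le_sum_rank_of_levels {I J : Type*} [Fintype I] [Fintype J]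
    (P : Matrix I J Bool) (s : ℕ → Bool) (ρ : I → J → ℕ) (k : ℕ) (p : ℕ → Matrix I J ℝ)
    (hρ : ∀ x y, ρ x y ≤ k) (hP : ∀ x y, P x y = s (ρ x y))
    (hzero : ∀ t x y, ρ x y < t → p t x y = 0) (htop : ∀ x y, 0 < p (ρ x y) x y) :
    signrank P ≤ ∑ t ∈ range (k + 1), (p t).rank := by
  set σ : ℕ → ℝ := fun t => if s t then 1 else -1
  have hσ : ∀ t, σ t ≠ 0 := fun t => by by_cases h : s t <;> simp [σ, h]
  set q : I → J → ℝ[X] := fun x y => ∑ t ∈ range (k + 1), C (σ t * p t x y) * X ^ t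
  have hlead : ∀ x y, (q x y).leadingCoeff = σ (ρ x y) * p (ρ x y) x y := fun x y =>
    leadingCoeff_sum_C_mul_X_pow (hρ x y) (fun t ht => by rw [hzero t x y ht, mul_zero])
      (mul_ne_zero (hσ _) (htop x y).ne')
  obtain ⟨β, hβ⟩ : ∃ β : ℝ, ∀ x y, 0 < (q x y).leadingCoeff * (q x y).eval β :=
    (eventually_all.2 fun x => eventually_all.2 fun y => eventually_pos_leadingCoeff_mul_eval
      fun h => (mul_ne_zero (hσ _) (htop x y).ne') (by rw [← hlead, h, leadingCoeff_zero])).exists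
  set R : Matrix I J ℝ := ∑ t ∈ range (k + 1), (σ t * β ^ t) • p t
  have hR : ∀ x y, R x y = (q x y).eval β := fun x y => by
    simp [R, q, eval_finsetSum, Matrix.sum_apply, mul_comm, mul_left_comm]
  have hsign : ∀ x y, 0 < σ (ρ x y) * p (ρ x y) x y * R x y := fun x y => by
    rw [hR, ← hlead]
    exact hβ x y
  calc signrank P ≤ R.rank := signrank_le_rank R fun x y => by
        rw [hP]
        cases hs : s (ρ x y)
        · refine ⟨by simp, fun _ => neg_of_mul_pos_right (hsign x y) ?_⟩
          simp [σ, hs, (htop x y).le]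
        · refine ⟨fun _ => pos_of_mul_pos_right (hsign x y) ?_, by simp⟩
          simp [σ, hs, (htop x y).le]
    _ ≤ ∑ t ∈ range (k + 1), ((σ t * β ^ t) • p t).rank := rank_sum_le _ _
    _ ≤ ∑ t ∈ range (k + 1), (p t).rank := sum_le_sum fun t _ => rank_smul_le _ _

theorem stmt11 :
    ∃ C : ℕ → ℕ, ∀ (k N a b : ℕ) (A B : Fin N → Matrix (Fin a) (Fin b) ℝ)
      (g : ℕ → Bool), (∀ m, k ≤ m → g m = g k) →
      ∀ P : Matrix (Fin N) (Fin N) Bool,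
        (∀ x y, P x y = g ((A x + B y).rank)) →
        signrank P ≤ C k := by
  refine ⟨fun k => ∑ t ∈ range (k + 1), (sumSqMinorsAddPoly (Fin k) ℝ t).support.card,
    fun k N a b A B g hg P hP => ?_⟩
  obtain ⟨U, V, hUV⟩ :=
    exists_rank_mul_mul_eq_min (κ := Fin k) fun z : Fin N × Fin N => A z.1 + B z.2
  set M : Fin N → Fin N → Matrix (Fin k) (Fin k) ℝ := fun x y => U * (A x + B y) * V
  have hMrank : ∀ x y, (M x y).rank = min (A x + B y).rank k := fun x y => by
    simpa using hUV (x, y)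
  have hg_min : ∀ r, g (min r k) = g r := fun r => by
    rcases le_total r k with h | h
    · rw [min_eq_left h]
    · rw [min_eq_right h, hg r h]
  refine (signrank_le_sum_rank_of_levels P g (fun x y => (M x y).rank) k
    (fun t => of fun x y => sumSqMinors t (M x y)) (fun x y => hMrank x y ▸ min_le_right _ _)
    (fun x y => by rw [hP, hMrank, hg_min]) (fun t x y h => sumSqMinors_eq_zero_iff.2 h)
    (fun x y => sumSqMinors_pos_iff.2 le_rfl)).trans (sum_le_sum fun t _ => ?_)
  have hM : ∀ x y, M x y = U * A x * V + U * B y * V := fun x y => by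
    simp only [M, Matrix.mul_add, Matrix.add_mul]
  simp_rw [hM, ← eval_sumSqMinorsAddPoly]
  exact rank_of_eval_le_card_support _ _ _
end
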